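/- arXiv:2011.07610 — 3 statements merged into one kernel-verified Lean document; each statement's English description precedes it below -/
import Mathlib

section
/- For the three-player fair gambler's ruin with initial capitals A, B, C ≥ 1, letting T1 be the first time some player is eliminated (reaches capital 0), the expected value of T1 equals 3ABC/(A+B+C). -/
/-- Discrete maximum principle: a function harmonic at interior points of the
triangle `{x + y ≤ N}` and vanishing on the boundary is `≤ 0` everywhere. -/
lemma three_player_max_principle (N : ℕ) (h : ℕ → ℕ → ℝ)
    (hb1 : ∀ y, y ≤ N → h 0 y = 0)
    (hb2 : ∀ x, x ≤ N → h x 0 = 0)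
    (hb3 : ∀ x y, x + y = N → h x y = 0)
    (hmean : ∀ x y, 1 ≤ x → 1 ≤ y → x + y ≤ N - 1 →
      h x y = (h (x - 1) (y + 1) + h (x + 1) (y - 1) + h (x - 1) y
        + h (x + 1) y + h x (y - 1) + h x (y + 1)) / 6) :
    ∀ x y, x + y ≤ N → h x y ≤ 0 := by
  classical
  set K : Finset (ℕ × ℕ) :=
    (Finset.range (N + 1) ×ˢ Finset.range (N + 1)).filter (fun p => p.1 + p.2 ≤ N) with hK
  have hKmem : ∀ p : ℕ × ℕ, p ∈ K ↔ p.1 + p.2 ≤ N := by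
    intro p
    simp only [hK, Finset.mem_filter, Finset.mem_product, Finset.mem_range, Nat.lt_succ_iff]
    omega
  have hKne : K.Nonempty := ⟨(0, 0), (hKmem (0, 0)).2 (by omega)⟩
  have hIne : (K.image fun p => h p.1 p.2).Nonempty := hKne.image _
  set M : ℝ := (K.image fun p => h p.1 p.2).max' hIne with hM
  have hle : ∀ x y, x + y ≤ N → h x y ≤ M := by
    intro x y hxy
    exact Finset.le_max' (K.image fun p => h p.1 p.2) (h x y)
      (Finset.mem_image_of_mem (fun p => h p.1 p.2) ((hKmem (x, y)).2 hxy))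
  have hAne : (K.filter (fun p => h p.1 p.2 = M)).Nonempty := by
    obtain ⟨v, hv, he⟩ := Finset.mem_image.1 ((K.image fun p => h p.1 p.2).max'_mem hIne)
    exact ⟨v, Finset.mem_filter.2 ⟨hv, he⟩⟩
  obtain ⟨q, hqA, hqmin⟩ := Finset.exists_min_image _ (fun p => p.1) hAne
  have hqK : q ∈ K := (Finset.mem_filter.1 hqA).1
  have hqM : h q.1 q.2 = M := (Finset.mem_filter.1 hqA).2
  have hqN : q.1 + q.2 ≤ N := (hKmem q).1 hqK
  have hM0 : M ≤ 0 := by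
    rcases Nat.eq_zero_or_pos q.1 with h1 | h1
    · rw [← hqM, h1, hb1 q.2 (by omega)]
    rcases Nat.eq_zero_or_pos q.2 with h2 | h2
    · rw [← hqM, h2, hb2 q.1 (by omega)]
    rcases eq_or_lt_of_le hqN with h3 | h3
    · rw [← hqM, hb3 q.1 q.2 h3]
    · exfalso
      have hint : q.1 + q.2 ≤ N - 1 := by omega
      have e := hmean q.1 q.2 h1 h2 hint
      have n1 : h (q.1 - 1) (q.2 + 1) ≤ M := hle _ _ (by omega)
      have n2 : h (q.1 + 1) (q.2 - 1) ≤ M := hle _ _ (by omega)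
      have n3 : h (q.1 - 1) q.2 ≤ M := hle _ _ (by omega)
      have n4 : h (q.1 + 1) q.2 ≤ M := hle _ _ (by omega)
      have n5 : h q.1 (q.2 - 1) ≤ M := hle _ _ (by omega)
      have n6 : h q.1 (q.2 + 1) ≤ M := hle _ _ (by omega)
      have n3' : h (q.1 - 1) q.2 = M := by
        rw [hqM] at e; linarith
      have hmemA : (q.1 - 1, q.2) ∈ K.filter (fun p => h p.1 p.2 = M) :=
        Finset.mem_filter.2 ⟨(hKmem _).2 (by simp; omega), n3'⟩
      have := hqmin _ hmemA
      simp at this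
      omega
  intro x y hxy
  exact (hle x y hxy).trans hM0

/-- Three-player fair gambler's ruin with initial capitals `A, B, C ≥ 1` and
`N = A + B + C`, state `(x₁, x₂)` with player 3 holding `N - x₁ - x₂`.  Let
`f x₁ x₂` be the expected value of `T₁`, the first time some player is
eliminated.  Then `f` vanishes on the boundary (some capital is `0`) and
satisfies `f = 1 + (average of the six neighbors)` at interior states (each of
the six unit transfers between a uniformly chosen pair occurs with probability
`1/6`).  Conclusion: `E(T₁) = f A B = 3ABC / (A + B + C)`. -/
theorem three_player_expected_T1 (A B C : ℕ) (hA : 1 ≤ A) (hB : 1 ≤ B) (hC : 1 ≤ C)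
    (N : ℕ) (hN : N = A + B + C) (f : ℕ → ℕ → ℝ)
    (hbdyA : ∀ x₂, x₂ ≤ N → f 0 x₂ = 0)
    (hbdyB : ∀ x₁, x₁ ≤ N → f x₁ 0 = 0)
    (hbdyC : ∀ x₁ x₂, x₁ + x₂ = N → f x₁ x₂ = 0)
    (hint : ∀ x₁ x₂ : ℕ, 1 ≤ x₁ → 1 ≤ x₂ → x₁ + x₂ ≤ N - 1 →
      f x₁ x₂ = 1 + (f (x₁ - 1) (x₂ + 1) + f (x₁ + 1) (x₂ - 1) + f (x₁ - 1) x₂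
        + f (x₁ + 1) x₂ + f x₁ (x₂ - 1) + f x₁ (x₂ + 1)) / 6) :
    f A B = 3 * A * B * C / (A + B + C) := by
  have hN3 : 3 ≤ N := by omega
  have hNpos : 0 < N := by omega
  have hNR : (0 : ℝ) < (N : ℝ) := by exact_mod_cast hNpos
  set g : ℕ → ℕ → ℝ := fun x y => 3 * (x : ℝ) * (y : ℝ) * ((N : ℝ) - x - y) / N with hg
  -- g satisfies the same interior equation
  have hgmean : ∀ x y : ℕ, 1 ≤ x → 1 ≤ y → x + y ≤ N - 1 →
      g x y = 1 + (g (x - 1) (y + 1) + g (x + 1) (y - 1) + g (x - 1) y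
        + g (x + 1) y + g x (y - 1) + g x (y + 1)) / 6 := by
    intro x y hx hy hxy
    have hx' : ((x - 1 : ℕ) : ℝ) = (x : ℝ) - 1 := by
      rw [Nat.cast_sub hx]; norm_num
    have hy' : ((y - 1 : ℕ) : ℝ) = (y : ℝ) - 1 := by
      rw [Nat.cast_sub hy]; norm_num
    simp only [hg, hx', hy', Nat.cast_add, Nat.cast_one]
    field_simp
    ring
  -- the difference h := f - g
  set h : ℕ → ℕ → ℝ := fun x y => f x y - g x y with hh
  have hb1 : ∀ y, y ≤ N → h 0 y = 0 := by
    intro y hy; simp [hh, hg, hbdyA y hy]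
  have hb2 : ∀ x, x ≤ N → h x 0 = 0 := by
    intro x hx; simp [hh, hg, hbdyB x hx]
  have hb3 : ∀ x y, x + y = N → h x y = 0 := by
    intro x y hxy
    have hxy' : (x : ℝ) + (y : ℝ) = (N : ℝ) := by exact_mod_cast hxy
    have hz : (N : ℝ) - x - y = 0 := by linarith
    simp [hh, hg, hbdyC x y hxy, hz]
  have hmean : ∀ x y, 1 ≤ x → 1 ≤ y → x + y ≤ N - 1 →
      h x y = (h (x - 1) (y + 1) + h (x + 1) (y - 1) + h (x - 1) y
        + h (x + 1) y + h x (y - 1) + h x (y + 1)) / 6 := by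
    intro x y hx hy hxy
    have e1 := hint x y hx hy hxy
    have e2 := hgmean x y hx hy hxy
    simp only [hh]
    linarith
  have hneg : ∀ x y, 1 ≤ x → 1 ≤ y → x + y ≤ N - 1 →
      (-h x y) = ((-h (x - 1) (y + 1)) + (-h (x + 1) (y - 1)) + (-h (x - 1) y)
        + (-h (x + 1) y) + (-h x (y - 1)) + (-h x (y + 1))) / 6 := by
    intro x y hx hy hxy
    have := hmean x y hx hy hxy
    linarith
  have hAB : A + B ≤ N := by omega
  have h1 := three_player_max_principle N h hb1 hb2 hb3 hmean A B hAB
  have h2 := three_player_max_principle N (fun x y => -h x y)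
    (fun y hy => by simp [hb1 y hy]) (fun x hx => by simp [hb2 x hx])
    (fun x y hxy => by simp [hb3 x y hxy]) hneg A B hAB
  have hzero : h A B = 0 := le_antisymm h1 (by simpa using h2)
  have hfg : f A B = g A B := by
    have : f A B - g A B = 0 := hzero
    linarith
  rw [hfg]
  have hC' : (N : ℝ) - A - B = (C : ℝ) := by
    have : (N : ℕ) = A + B + C := hN
    push_cast [this]
    ring
  have hNR' : (N : ℝ) = (A : ℝ) + B + C := by push_cast [hN]; ring
  simp only [hg, hC', hNR']
  ring
end

section
/- For the three-player fair gambler's ruin with initial capitals A, B, C ≥ 1, letting T2 be the first time two players have been eliminated (some player holds all N = A+B+C units), the expected value of T2 equals AB + AC + BC. -/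
lemma lin1D (n : ℕ) (hn : 1 ≤ n) (u : ℕ → ℝ) (h0 : u 0 = 0) (hn0 : u n = 0)
    (hrec : ∀ y, 1 ≤ y → y ≤ n - 1 → u y = (u (y - 1) + u (y + 1)) / 2) :
    ∀ y, y ≤ n → u y = 0 := by
  have aux : ∀ y, y + 1 ≤ n → u y = y * u 1 ∧ u (y + 1) = (y + 1) * u 1 := by
    intro y
    induction y with
    | zero => intro _; constructor <;> simp [h0]
    | succ k ih =>
      intro hk
      have h1 := ih (by omega)
      have hr := hrec (k + 1) (by omega) (by omega)
      simp only [Nat.add_sub_cancel] at hr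
      constructor
      · push_cast; push_cast at h1; exact h1.2
      · push_cast; push_cast at h1; linarith [h1.1, h1.2, hr]
  have hu1 : u 1 = 0 := by
    have h := (aux (n - 1) (by omega)).2
    have hn1 : n - 1 + 1 = n := by omega
    rw [hn1, hn0] at h
    have hne : ((n - 1 : ℕ) : ℝ) + 1 ≠ 0 := by
      have : (0:ℝ) ≤ ((n-1:ℕ):ℝ) := Nat.cast_nonneg _
      linarith
    have := mul_eq_zero.mp h.symm
    tauto
  intro y hy
  rcases Nat.eq_zero_or_pos y with rfl | hy1
  · exact h0
  · have h := (aux (y - 1) (by omega)).2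
    have hh : y - 1 + 1 = y := by omega
    rw [hh] at h
    rw [h, hu1]; ring

lemma keyMax (N : ℕ) (hN3 : 3 ≤ N) (h : ℕ → ℕ → ℝ)
    (hc1 : h 0 0 = 0) (hc2 : h N 0 = 0) (hc3 : h 0 N = 0)
    (he1 : ∀ y, 1 ≤ y → y ≤ N - 1 → h 0 y = (h 0 (y - 1) + h 0 (y + 1)) / 2)
    (he2 : ∀ x, 1 ≤ x → x ≤ N - 1 → h x 0 = (h (x - 1) 0 + h (x + 1) 0) / 2)
    (he3 : ∀ x, 1 ≤ x → x ≤ N - 1 →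
      h x (N - x) = (h (x - 1) (N - x + 1) + h (x + 1) (N - x - 1)) / 2)
    (hi : ∀ x y, 1 ≤ x → 1 ≤ y → x + y ≤ N - 1 →
      h x y = (h (x - 1) (y + 1) + h (x + 1) (y - 1) + h (x - 1) y
        + h (x + 1) y + h x (y - 1) + h x (y + 1)) / 6) :
    ∀ x y, x + y ≤ N → h x y ≤ 0 := by
  -- zero on the three edges
  have e1 : ∀ y, y ≤ N → h 0 y = 0 := lin1D N (by omega) (h 0) hc1 hc3 he1
  have e2 : ∀ x, x ≤ N → h x 0 = 0 := lin1D N (by omega) (fun x => h x 0) hc1 hc2 he2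
  have e3 : ∀ x, x ≤ N → h x (N - x) = 0 := by
    apply lin1D N (by omega) (fun x => h x (N - x))
    · simpa using hc3
    · simpa using hc2
    · intro x h1 h2
      have r := he3 x h1 h2
      have a1 : N - x + 1 = N - (x - 1) := by omega
      have a2 : N - x - 1 = N - (x + 1) := by omega
      rw [a1, a2] at r
      exact r
  -- maximum over the triangle
  set s : Finset (ℕ × ℕ) :=
    (Finset.range (N + 1) ×ˢ Finset.range (N + 1)).filter (fun p => p.1 + p.2 ≤ N) with hs
  have hmem : ∀ p : ℕ × ℕ, p ∈ s ↔ p.1 + p.2 ≤ N := by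
    intro p
    simp only [hs, Finset.mem_filter, Finset.mem_product, Finset.mem_range]
    omega
  have hne : s.Nonempty := ⟨(0, 0), (hmem (0,0)).2 (by omega)⟩
  obtain ⟨p, hp, hmax⟩ := s.exists_max_image (fun p => h p.1 p.2) hne
  set M := h p.1 p.2 with hM
  have hmax' : ∀ x y, x + y ≤ N → h x y ≤ M := by
    intro x y hxy
    exact hmax (x, y) ((hmem (x,y)).2 hxy)
  -- propagation: an interior point attaining M forces M ≤ 0
  have prop : ∀ x y, 1 ≤ y → x + y ≤ N - 1 → h x y = M → M ≤ 0 := by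
    intro x
    induction x with
    | zero =>
      intro y hy hxy hval
      have := e1 y (by omega)
      rw [this] at hval
      linarith
    | succ k ih =>
      intro y hy hxy hval
      have heq := hi (k + 1) y (by omega) hy hxy
      simp only [Nat.add_sub_cancel] at heq
      have n1 : h k (y + 1) ≤ M := hmax' _ _ (by omega)
      have n2 : h (k + 2) (y - 1) ≤ M := hmax' _ _ (by omega)
      have n3 : h k y ≤ M := hmax' _ _ (by omega)
      have n4 : h (k + 2) y ≤ M := hmax' _ _ (by omega)
      have n5 : h (k + 1) (y - 1) ≤ M := hmax' _ _ (by omega)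
      have n6 : h (k + 1) (y + 1) ≤ M := hmax' _ _ (by omega)
      have hkM : h k y = M := by rw [hval] at heq; linarith
      exact ih y hy (by omega) hkM
  have hM0 : M ≤ 0 := by
    have hpN : p.1 + p.2 ≤ N := (hmem p).1 hp
    rcases Nat.eq_zero_or_pos p.1 with h1 | h1
    · have := e1 p.2 (by omega)
      rw [hM, h1, this]
    · rcases Nat.eq_zero_or_pos p.2 with h2 | h2
      · have := e2 p.1 (by omega)
        rw [hM, h2, this]
      · rcases Nat.lt_or_ge (p.1 + p.2) N with hlt | hge
        · exact prop p.1 p.2 h2 (by omega) rfl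
        · have hp2 : p.2 = N - p.1 := by omega
          have := e3 p.1 (by omega)
          rw [hM, hp2, this]
  intro x y hxy
  exact le_trans (hmax' x y hxy) hM0


/-- Three-player fair gambler's ruin with initial capitals `A, B, C ≥ 1` and
`N = A + B + C`, state `(x₁, x₂)` with player 3 holding `N - x₁ - x₂`.  Let
`g x₁ x₂` be the expected value of `T₂`, the total number of rounds until one
player holds all `N` units.  Then `g` vanishes at the three absorbing corners,
satisfies `g = 1 + (average of the two neighbors)` on the open edges (where two
players remain, playing fair unit coin flips), and
`g = 1 + (average of the six neighbors)` at interior states.  Conclusion: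
`E(T₂) = g A B = AB + AC + BC`. -/
theorem three_player_expected_T2 (A B C : ℕ) (hA : 1 ≤ A) (hB : 1 ≤ B) (hC : 1 ≤ C)
    (N : ℕ) (hN : N = A + B + C) (g : ℕ → ℕ → ℝ)
    (hcorner1 : g 0 0 = 0) (hcorner2 : g N 0 = 0) (hcorner3 : g 0 N = 0)
    (hedgeA : ∀ x₂, 1 ≤ x₂ → x₂ ≤ N - 1 →
      g 0 x₂ = 1 + (g 0 (x₂ - 1) + g 0 (x₂ + 1)) / 2)
    (hedgeB : ∀ x₁, 1 ≤ x₁ → x₁ ≤ N - 1 →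
      g x₁ 0 = 1 + (g (x₁ - 1) 0 + g (x₁ + 1) 0) / 2)
    (hedgeC : ∀ x₁, 1 ≤ x₁ → x₁ ≤ N - 1 →
      g x₁ (N - x₁) = 1 + (g (x₁ - 1) (N - x₁ + 1) + g (x₁ + 1) (N - x₁ - 1)) / 2)
    (hint : ∀ x₁ x₂ : ℕ, 1 ≤ x₁ → 1 ≤ x₂ → x₁ + x₂ ≤ N - 1 →
      g x₁ x₂ = 1 + (g (x₁ - 1) (x₂ + 1) + g (x₁ + 1) (x₂ - 1) + g (x₁ - 1) x₂
        + g (x₁ + 1) x₂ + g x₁ (x₂ - 1) + g x₁ (x₂ + 1)) / 6) :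
    g A B = A * B + A * C + B * C := by
  have hN3 : 3 ≤ N := by omega
  set f : ℕ → ℕ → ℝ := fun x y => (x : ℝ) * y + ((x : ℝ) + y) * ((N : ℝ) - x - y) with hf
  set h : ℕ → ℕ → ℝ := fun x y => g x y - f x y with hh
  -- corner values
  have hc1 : h 0 0 = 0 := by simp [hh, hf, hcorner1]
  have hc2 : h N 0 = 0 := by simp [hh, hf, hcorner2]
  have hc3 : h 0 N = 0 := by simp [hh, hf, hcorner3]
  -- edges
  have he1 : ∀ y, 1 ≤ y → y ≤ N - 1 → h 0 y = (h 0 (y - 1) + h 0 (y + 1)) / 2 := by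
    intro y h1 h2
    have c1 : ((y - 1 : ℕ) : ℝ) = (y : ℝ) - 1 := by
      have := Nat.cast_sub (R := ℝ) h1; push_cast at this ⊢; linarith
    simp only [hh, hf]
    push_cast [c1]
    linear_combination hedgeA y h1 h2
  have he2 : ∀ x, 1 ≤ x → x ≤ N - 1 → h x 0 = (h (x - 1) 0 + h (x + 1) 0) / 2 := by
    intro x h1 h2
    have c1 : ((x - 1 : ℕ) : ℝ) = (x : ℝ) - 1 := by
      have := Nat.cast_sub (R := ℝ) h1; push_cast at this ⊢; linarith
    simp only [hh, hf]
    push_cast [c1]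
    linear_combination hedgeB x h1 h2
  have he3 : ∀ x, 1 ≤ x → x ≤ N - 1 →
      h x (N - x) = (h (x - 1) (N - x + 1) + h (x + 1) (N - x - 1)) / 2 := by
    intro x h1 h2
    have hxN : x ≤ N := by omega
    have c1 : ((x - 1 : ℕ) : ℝ) = (x : ℝ) - 1 := by
      have := Nat.cast_sub (R := ℝ) h1; push_cast at this ⊢; linarith
    have c2 : ((N - x : ℕ) : ℝ) = (N : ℝ) - x := by
      have := Nat.cast_sub (R := ℝ) hxN; push_cast at this ⊢; linarith
    have c3 : ((N - x - 1 : ℕ) : ℝ) = (N : ℝ) - x - 1 := by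
      have e : N - x - 1 = N - (x + 1) := by omega
      rw [e]
      have := Nat.cast_sub (R := ℝ) (show x + 1 ≤ N by omega)
      push_cast at this ⊢; linarith
    simp only [hh, hf]
    push_cast [c1, c2, c3]
    linear_combination hedgeC x h1 h2
  -- interior
  have hi : ∀ x y, 1 ≤ x → 1 ≤ y → x + y ≤ N - 1 →
      h x y = (h (x - 1) (y + 1) + h (x + 1) (y - 1) + h (x - 1) y
        + h (x + 1) y + h x (y - 1) + h x (y + 1)) / 6 := by
    intro x y h1 h2 h3
    have c1 : ((x - 1 : ℕ) : ℝ) = (x : ℝ) - 1 := by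
      have := Nat.cast_sub (R := ℝ) h1; push_cast at this ⊢; linarith
    have c2 : ((y - 1 : ℕ) : ℝ) = (y : ℝ) - 1 := by
      have := Nat.cast_sub (R := ℝ) h2; push_cast at this ⊢; linarith
    simp only [hh, hf]
    push_cast [c1, c2]
    linear_combination hint x y h1 h2 h3
  -- apply maximum principle to h and -h
  have hAB : A + B ≤ N := by omega
  have hle := keyMax N hN3 h hc1 hc2 hc3 he1 he2 he3 hi A B hAB
  have hge := keyMax N hN3 (fun x y => -h x y) (by simp [hc1]) (by simp [hc2]) (by simp [hc3])
    (by intro y h1 h2; rw [he1 y h1 h2]; ring)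
    (by intro x h1 h2; rw [he2 x h1 h2]; ring)
    (by intro x h1 h2; rw [he3 x h1 h2]; ring)
    (by intro x y h1 h2 h3; rw [hi x y h1 h2 h3]; ring)
    A B hAB
  have hzero : h A B = 0 := le_antisymm hle (by linarith)
  have : g A B = f A B := by simp only [hh] at hzero; linarith
  rw [this]
  simp only [hf]
  have : (N : ℝ) = A + B + C := by rw [hN]; push_cast; ring
  rw [this]
  ring
end

section
/- For the ICM with three players with capitals A = B = i and C = N - 2i (1 ≤ i < N/2), P^ICM(123) = (C/N)(B/(A+B)) = (1/2)(1 - 2i/N), which coincides exactly with the gambler's ruin probability P^GR_{i,i,N-2i}(123). -/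
/- Three-player fair gambler's ruin with total capital `N`, state `(A, B)` with
player 3 holding `C = N - A - B`.  While all three players are alive (interior
states), a uniformly random pair is chosen and a fair coin flip transfers one
unit (six equally likely transitions).  After one player is eliminated, the
remaining two play fair unit-bet gambler's ruin (the corresponding edge of the
triangle, two equally likely transitions). -/

/-- Discrete harmonicity at interior states (all three capitals `≥ 1`). -/
def Interior6 (N : ℕ) (p : ℕ → ℕ → ℝ) : Prop :=
  ∀ A B : ℕ, 1 ≤ A → 1 ≤ B → A + B ≤ N - 1 →
    p A B = (p (A - 1) (B + 1) + p (A + 1) (B - 1) + p (A - 1) B + p (A + 1) B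
      + p A (B - 1) + p A (B + 1)) / 6

/-- Two-player gambler's ruin recurrence on the edge `A = 0` (players 2, 3). -/
def EdgeA (N : ℕ) (p : ℕ → ℕ → ℝ) : Prop :=
  ∀ B : ℕ, 1 ≤ B → B ≤ N - 1 → p 0 B = (p 0 (B - 1) + p 0 (B + 1)) / 2

/-- Two-player gambler's ruin recurrence on the edge `B = 0` (players 1, 3). -/
def EdgeB (N : ℕ) (p : ℕ → ℕ → ℝ) : Prop :=
  ∀ A : ℕ, 1 ≤ A → A ≤ N - 1 → p A 0 = (p (A - 1) 0 + p (A + 1) 0) / 2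

/-- Two-player gambler's ruin recurrence on the edge `A + B = N` (players 1, 2). -/
def EdgeC (N : ℕ) (p : ℕ → ℕ → ℝ) : Prop :=
  ∀ A : ℕ, 1 ≤ A → A ≤ N - 1 →
    p A (N - A) = (p (A - 1) (N - A + 1) + p (A + 1) (N - A - 1)) / 2

/-- Vanishing on the open edge `A = 0`. -/
def ZeroA (N : ℕ) (p : ℕ → ℕ → ℝ) : Prop := ∀ B : ℕ, 1 ≤ B → B ≤ N - 1 → p 0 B = 0

/-- Vanishing on the open edge `B = 0`. -/
def ZeroB (N : ℕ) (p : ℕ → ℕ → ℝ) : Prop := ∀ A : ℕ, 1 ≤ A → A ≤ N - 1 → p A 0 = 0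

/-- Vanishing on the open edge `A + B = N`. -/
def ZeroC (N : ℕ) (p : ℕ → ℕ → ℝ) : Prop := ∀ A : ℕ, 1 ≤ A → A ≤ N - 1 → p A (N - A) = 0

/-- `p A B = P_{A,B,N-A-B}(123)`: player 1 eliminated first, then player 2,
player 3 wins all.  Zero on the edges where player 2 or player 3 is eliminated
first, two-player recurrence on the edge `A = 0` ending at `(0,0)` (player 3
holds all `N`) with success, at `(0,N)` (player 2 holds all) with failure. -/
def IsP123 (N : ℕ) (p : ℕ → ℕ → ℝ) : Prop :=
  Interior6 N p ∧ EdgeA N p ∧ ZeroB N p ∧ ZeroC N p ∧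
    p 0 0 = 1 ∧ p 0 N = 0 ∧ p N 0 = 0

/-- `p A B = P_{A,B,N-A-B}(132)`: player 1 first, then player 3, player 2 wins. -/
def IsP132 (N : ℕ) (p : ℕ → ℕ → ℝ) : Prop :=
  Interior6 N p ∧ EdgeA N p ∧ ZeroB N p ∧ ZeroC N p ∧
    p 0 N = 1 ∧ p 0 0 = 0 ∧ p N 0 = 0

/-- `p A B = P_{A,B,N-A-B}(213)`: player 2 first, then player 1, player 3 wins. -/
def IsP213 (N : ℕ) (p : ℕ → ℕ → ℝ) : Prop :=
  Interior6 N p ∧ EdgeB N p ∧ ZeroA N p ∧ ZeroC N p ∧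
    p 0 0 = 1 ∧ p N 0 = 0 ∧ p 0 N = 0

/-- `p A B = P_{A,B,N-A-B}(231)`: player 2 first, then player 3, player 1 wins. -/
def IsP231 (N : ℕ) (p : ℕ → ℕ → ℝ) : Prop :=
  Interior6 N p ∧ EdgeB N p ∧ ZeroA N p ∧ ZeroC N p ∧
    p N 0 = 1 ∧ p 0 0 = 0 ∧ p 0 N = 0

/-- `p A B = P_{A,B,N-A-B}(312)`: player 3 first, then player 1, player 2 wins. -/
def IsP312 (N : ℕ) (p : ℕ → ℕ → ℝ) : Prop :=
  Interior6 N p ∧ EdgeC N p ∧ ZeroA N p ∧ ZeroB N p ∧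
    p 0 N = 1 ∧ p N 0 = 0 ∧ p 0 0 = 0

/-- `p A B = P_{A,B,N-A-B}(321)`: player 3 first, then player 2, player 1 wins. -/
def IsP321 (N : ℕ) (p : ℕ → ℕ → ℝ) : Prop :=
  Interior6 N p ∧ EdgeC N p ∧ ZeroA N p ∧ ZeroB N p ∧
    p N 0 = 1 ∧ p 0 N = 0 ∧ p 0 0 = 0

/-! Symmetrising in players 1 and 2 turns `P(123)` into `P(123) + P(213)`, the probability
that player 3 wins, which is `C / N`: the function `(A, B) ↦ p A B + p B A - (N - A - B) / N`
is harmonic for the six-neighbour walk and vanishes on the boundary of the triangle, hence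
vanishes identically by the maximum principle. On the diagonal `A = B = i` this gives
`2 P(123) = (N - 2i) / N`. -/

open Finset

theorem eq_affine_of_midpoint (N : ℕ) (f : ℕ → ℝ)
    (hf : ∀ B, 1 ≤ B → B ≤ N - 1 → f B = (f (B - 1) + f (B + 1)) / 2) :
    ∀ B, B ≤ N → f B = f 0 + B * (f 1 - f 0) := by
  intro B
  induction B using Nat.strong_induction_on with
  | _ B ih =>
    intro hB
    match B, hB with
    | 0, _ => simp
    | 1, _ => push_cast; ring
    | B + 2, hB =>
      have hmid := hf (B + 1) (by omega) (by omega)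
      have hB0 := ih B (by omega) (by omega)
      have hB1 := ih (B + 1) (by omega) (by omega)
      simp only [Nat.add_sub_cancel] at hmid
      push_cast at hB0 hB1 ⊢
      linarith

theorem eq_gamblersRuin_of_midpoint (N : ℕ) (hN : 1 ≤ N) (f : ℕ → ℝ)
    (hf : ∀ B, 1 ≤ B → B ≤ N - 1 → f B = (f (B - 1) + f (B + 1)) / 2)
    (h0 : f 0 = 1) (hN0 : f N = 0) :
    ∀ B, B ≤ N → f B = ((N : ℝ) - B) / N := by
  have hNR : (N : ℝ) ≠ 0 := Nat.cast_ne_zero.mpr (by omega)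
  have hslope : f 1 - f 0 = -1 / N := by
    have := eq_affine_of_midpoint N f hf N le_rfl
    rw [h0, hN0] at this
    rw [h0]
    field_simp
    linarith
  intro B hB
  rw [eq_affine_of_midpoint N f hf B hB, hslope, h0]
  field_simp
  ring

namespace Interior6

variable {N : ℕ} {v w : ℕ → ℕ → ℝ}

theorem neg (hv : Interior6 N v) : Interior6 N (-v) := by
  intro A B hA hB hAB
  simp only [Pi.neg_apply]
  linarith [hv A B hA hB hAB]

theorem add (hv : Interior6 N v) (hw : Interior6 N w) : Interior6 N (v + w) := by
  intro A B hA hB hAB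
  simp only [Pi.add_apply]
  linarith [hv A B hA hB hAB, hw A B hA hB hAB]

theorem sub (hv : Interior6 N v) (hw : Interior6 N w) : Interior6 N (v - w) := by
  simpa only [sub_eq_add_neg] using hv.add hw.neg

/-- The six-neighbour stencil is symmetric under exchanging players 1 and 2. -/
theorem swap (hv : Interior6 N v) : Interior6 N (fun A B => v B A) := by
  intro A B hA hB hAB
  beta_reduce
  rw [hv B A hB hA (by omega)]
  ring

theorem affine (N : ℕ) (a b c : ℝ) : Interior6 N (fun A B => a * A + b * B + c) := by
  intro A B hA hB _
  obtain ⟨A, rfl⟩ : ∃ A', A = A' + 1 := ⟨A - 1, by omega⟩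
  obtain ⟨B, rfl⟩ : ∃ B', B = B' + 1 := ⟨B - 1, by omega⟩
  simp only [Nat.add_sub_cancel]
  push_cast
  ring

/-- A mean of six values `≤ M` equals `M` only if every value does. -/
theorem eq_of_isMax (hv : Interior6 N v) {M : ℝ}
    (hM : ∀ a b, 1 ≤ a + b → a + b ≤ N → v a b ≤ M) {A B : ℕ} (hA : 1 ≤ A) (hB : 1 ≤ B)
    (hAB : A + B ≤ N - 1) (hmax : v A B = M) : v (A + 1) B = M := by
  have hmean := hv A B hA hB hAB
  have h1 := hM (A - 1) (B + 1) (by omega) (by omega)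
  have h2 := hM (A + 1) (B - 1) (by omega) (by omega)
  have h3 := hM (A - 1) B (by omega) (by omega)
  have h4 := hM (A + 1) B (by omega) (by omega)
  have h5 := hM A (B - 1) (by omega) (by omega)
  have h6 := hM A (B + 1) (by omega) (by omega)
  linarith

/-- The corner `(0, 0)` may be left out: it is not a neighbour of any interior state. -/
theorem nonpos_of_boundary_nonpos (hv : Interior6 N v)
    (hbd : ∀ A B, 1 ≤ A + B → A + B ≤ N → (A = 0 ∨ B = 0 ∨ A + B = N) → v A B ≤ 0) :
    ∀ A B, 1 ≤ A + B → A + B ≤ N → v A B ≤ 0 := by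
  intro A B hAB hABN
  let T := (range (N + 1) ×ˢ range (N + 1)).filter fun x => 1 ≤ x.1 + x.2 ∧ x.1 + x.2 ≤ N
  have hmemT : ∀ a b, 1 ≤ a + b → a + b ≤ N → (a, b) ∈ T := fun a b h h' => by
    simp only [T, mem_filter, mem_product, mem_range]
    omega
  obtain ⟨⟨A₀, B₀⟩, hx₀, hmax⟩ :=
    T.exists_max_image (fun x => v x.1 x.2) ⟨(A, B), hmemT A B hAB hABN⟩
  have hM : ∀ a b, 1 ≤ a + b → a + b ≤ N → v a b ≤ v A₀ B₀ :=
    fun a b h h' => hmax (a, b) (hmemT a b h h')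
  -- Push the maximiser to the right until it hits the boundary.
  suffices hpush : ∀ k a b, a + b + k = N → 1 ≤ a + b → v a b = v A₀ B₀ → v A₀ B₀ ≤ 0 by
    simp only [T, mem_filter] at hx₀
    exact (hM A B hAB hABN).trans (hpush (N - (A₀ + B₀)) A₀ B₀ (by omega) hx₀.2.1 rfl)
  intro k
  induction k with
  | zero => exact fun a b hk h1 hmax' => hmax' ▸ hbd a b h1 (by omega) (by omega)
  | succ k ih =>
    intro a b hk h1 hmax'
    by_cases hedge : a = 0 ∨ b = 0
    · exact hmax' ▸ hbd a b h1 (by omega) (by omega)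
    · exact ih (a + 1) b (by omega) (by omega)
        (hv.eq_of_isMax hM (by omega) (by omega) (by omega) hmax')

theorem eq_zero_of_boundary_eq_zero (hv : Interior6 N v)
    (hbd : ∀ A B, 1 ≤ A + B → A + B ≤ N → (A = 0 ∨ B = 0 ∨ A + B = N) → v A B = 0)
    {A B : ℕ} (hAB : 1 ≤ A + B) (hABN : A + B ≤ N) : v A B = 0 := by
  have hle := hv.nonpos_of_boundary_nonpos (fun a b h h' hb => (hbd a b h h' hb).le) A B hAB hABN
  have hge := hv.neg.nonpos_of_boundary_nonpos
    (fun a b h h' hb => by simp [hbd a b h h' hb]) A B hAB hABN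
  simp only [Pi.neg_apply, neg_nonpos] at hge
  exact le_antisymm hle hge

end Interior6

namespace IsP123

variable {N : ℕ} {p : ℕ → ℕ → ℝ}

theorem edgeA_eq (hp : IsP123 N p) (hN : 1 ≤ N) {B : ℕ} (hB : B ≤ N) :
    p 0 B = ((N : ℝ) - B) / N :=
  eq_gamblersRuin_of_midpoint N hN (p 0) hp.2.1 hp.2.2.2.2.1 hp.2.2.2.2.2.1 B hB

theorem edgeB_eq_zero (hp : IsP123 N p) {A : ℕ} (hA : 1 ≤ A) (hAN : A ≤ N) : p A 0 = 0 := by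
  rcases hAN.eq_or_lt with rfl | hlt
  · exact hp.2.2.2.2.2.2
  · exact hp.2.2.1 A hA (by omega)

theorem edgeC_eq_zero (hp : IsP123 N p) {A : ℕ} (hAN : A ≤ N) : p A (N - A) = 0 := by
  rcases Nat.eq_zero_or_pos A with rfl | hA
  · simpa using hp.2.2.2.2.2.1
  rcases hAN.eq_or_lt with rfl | hlt
  · simpa using hp.2.2.2.2.2.2
  · exact hp.2.2.2.1 A hA (by omega)

theorem add_swap_eq (hp : IsP123 N p) {A B : ℕ} (hAB : 1 ≤ A + B) (hABN : A + B ≤ N) :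
    p A B + p B A = ((N : ℝ) - A - B) / N := by
  have hN : 1 ≤ N := hAB.trans hABN
  let u : ℕ → ℕ → ℝ := fun A B => p A B + p B A - ((N : ℝ) - A - B) / N
  have hlin : Interior6 N (fun A B => ((N : ℝ) - A - B) / N) := by
    convert Interior6.affine N (-1 / N) (-1 / N) (N / N) using 1
    funext A B
    ring
  have hu : Interior6 N u := (hp.1.add hp.1.swap).sub hlin
  have hbd : ∀ A B, 1 ≤ A + B → A + B ≤ N → (A = 0 ∨ B = 0 ∨ A + B = N) → u A B = 0 := by
    rintro a b h₁ h₂ (rfl | rfl | hC)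
    · simp only [u, hp.edgeA_eq hN (by omega : b ≤ N),
        hp.edgeB_eq_zero (by omega : 1 ≤ b) (by omega)]
      push_cast
      ring
    · simp only [u, hp.edgeA_eq hN (by omega : a ≤ N),
        hp.edgeB_eq_zero (by omega : 1 ≤ a) (by omega)]
      push_cast
      ring
    · obtain rfl : b = N - a := by omega
      have hswap : p (N - a) a = 0 := by
        have := hp.edgeC_eq_zero (A := N - a) (by omega)
        rwa [Nat.sub_sub_self (by omega : a ≤ N)] at this
      simp only [u, hp.edgeC_eq_zero (by omega : a ≤ N), hswap]
      rw [Nat.cast_sub (by omega : a ≤ N)]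
      ring
  linarith [hu.eq_zero_of_boundary_eq_zero hbd hAB hABN]

end IsP123

/-- For three players with capitals `A = B = i` and `C = N - 2i`
(`1 ≤ i < N/2`), the ICM probability
`P^ICM(123) = (C/N)(B/(A+B)) = (1/2)(1 - 2i/N)` coincides exactly with the
gambler's ruin probability `P^GR_{i,i,N-2i}(123)`. -/
theorem icm_eq_gr_equal_stacks (N i : ℕ) (hi : 1 ≤ i) (hiN : 2 * i < N)
    (p123 : ℕ → ℕ → ℝ) (h123 : IsP123 N p123) :
    ((N : ℝ) - 2 * i) / N * ((i : ℝ) / (i + i)) = (1 / 2) * (1 - 2 * (i : ℝ) / N) ∧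
    p123 i i = ((N : ℝ) - 2 * i) / N * ((i : ℝ) / (i + i)) := by
  have hN : (N : ℝ) ≠ 0 := Nat.cast_ne_zero.mpr (by omega)
  have hiR : (i : ℝ) ≠ 0 := Nat.cast_ne_zero.mpr (by omega)
  have hdiag := h123.add_swap_eq (A := i) (B := i) (by omega) (by omega)
  refine ⟨by field_simp; ring, ?_⟩
  field_simp at hdiag ⊢
  linarith
end
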